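/- Fix an LF order ≼ on F and a lex column order ≤ on V, and let X ∈ F be nonempty with Max(X) defined. Then Max(X) is the ≼-least set Y ∈ F satisfying left(X) ∉ Y and right(X) ∈ Y (i.e., Max(X) corresponds to the highest row t of the matrix with a 0 in column left(X) and a 1 in column right(X)). -/

import Mathlib

/-- Two sets `X` and `Y` overlap if `X ∩ Y ≠ ∅`, `X \ Y ≠ ∅` and `Y \ X ≠ ∅`. -/
def Overlaps {V : Type*} [DecidableEq V] (X Y : Finset V) : Prop :=
  (X ∩ Y).Nonempty ∧ (X \ Y).Nonempty ∧ (Y \ X).Nonempty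

/-!
Every set `Z` before `Max(X)` in LF order has `|Z| ≥ |Max(X)| ≥ |X|` and does not overlap `X`,
so it contains `X` or misses it: the columns of `X` agree on all rows above `Max(X)`. Since
`Max(X)` overlaps `X`, it is the first row separating two columns of `X`, and the lex condition
puts the columns of `X \ Max(X)` before those of `X ∩ Max(X)`. Hence `left(X) ∉ Max(X)`,
`right(X) ∈ Max(X)`, and no earlier row separates `left(X)` from `right(X)`.
-/

open Finset

section LexColumnOrder

variable {ι V : Type*}

section Overlaps

variable [DecidableEq V]

theorem Overlaps.of_card_le {X Z : Finset V} {p q : V} (hcard : #X ≤ #Z)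
    (hp : p ∈ X) (hpZ : p ∉ Z) (hq : q ∈ X) (hqZ : q ∈ Z) : Overlaps Z X := by
  refine ⟨⟨q, mem_inter.2 ⟨hqZ, hq⟩⟩, sdiff_nonempty.2 fun hZX => ?_, ⟨p, mem_sdiff.2 ⟨hp, hpZ⟩⟩⟩
  exact hpZ (eq_of_subset_of_card_le hZX hcard ▸ hp)

theorem mem_iff_mem_of_card_le_of_not_overlaps {X Z : Finset V} {v w : V} (hcard : #X ≤ #Z)
    (hZ : ¬Overlaps Z X) (hv : v ∈ X) (hw : w ∈ X) : v ∈ Z ↔ w ∈ Z := by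
  by_contra hvw
  by_cases hvZ : v ∈ Z
  · exact hZ (.of_card_le hcard hw (fun hwZ => hvw (iff_of_true hvZ hwZ)) hv hvZ)
  · exact hZ (.of_card_le hcard hv hvZ hw (by_contra fun hwZ => hvw (iff_of_false hvZ hwZ)))

end Overlaps

def IsLexColumnOrder [LT ι] [LT V] (S : ι → Finset V) : Prop :=
  ∀ v w : V, v < w → ∀ i : ι, ¬(v ∈ S i ↔ w ∈ S i) → (∀ j < i, v ∈ S j ↔ w ∈ S j) →
    v ∉ S i ∧ w ∈ S i

def IsLFOrder [LT ι] (S : ι → Finset V) : Prop :=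
  ∀ i j : ι, #(S j) < #(S i) → i < j

/-- `S m` is `Max(X)` when `ι` lists the family in LF order. -/
def IsMaxOverlap [DecidableEq V] [LE ι] (S : ι → Finset V) (X : Finset V) (m : ι) : Prop :=
  Overlaps (S m) X ∧ #X ≤ #(S m) ∧ ∀ i, #X ≤ #(S i) → Overlaps (S i) X → m ≤ i

theorem IsLexColumnOrder.lt_of_notMem_of_mem [LT ι] [LinearOrder V]
    {S : ι → Finset V} (hS : IsLexColumnOrder S) {i : ι} {v w : V}
    (hagree : ∀ j < i, v ∈ S j ↔ w ∈ S j) (hv : v ∉ S i) (hw : w ∈ S i) : v < w := by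
  refine lt_of_le_of_ne (le_of_not_gt fun hwv => ?_) fun hvw => hv (hvw ▸ hw)
  exact (hS w v hwv i (fun h => hv (h.1 hw)) fun j hj => (hagree j hj).symm).1 hw

section MaxOverlap

variable [DecidableEq V] [LinearOrder ι] {S : ι → Finset V} {X : Finset V} {m : ι}

theorem IsMaxOverlap.mem_iff_mem_of_lt (hLF : IsLFOrder S) (hm : IsMaxOverlap S X m) {i : ι}
    (hi : i < m) {v w : V} (hv : v ∈ X) (hw : w ∈ X) : v ∈ S i ↔ w ∈ S i := by
  have hcard : #X ≤ #(S i) := hm.2.1.trans (le_of_not_gt fun h => (hLF m i h).not_gt hi)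
  exact mem_iff_mem_of_card_le_of_not_overlaps hcard (fun hov => (hm.2.2 i hcard hov).not_gt hi)
    hv hw

theorem IsMaxOverlap.lt_of_notMem_of_mem [LinearOrder V] (hS : IsLexColumnOrder S)
    (hLF : IsLFOrder S) (hm : IsMaxOverlap S X m) {v w : V} (hv : v ∈ X) (hw : w ∈ X)
    (hvm : v ∉ S m) (hwm : w ∈ S m) : v < w :=
  hS.lt_of_notMem_of_mem (fun _ hi => hm.mem_iff_mem_of_lt hLF hi hv hw) hvm hwm

theorem IsMaxOverlap.isLeast_separating [LinearOrder V] (hS : IsLexColumnOrder S)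
    (hLF : IsLFOrder S) (hm : IsMaxOverlap S X m) {l r : V}
    (hl : l ∈ X ∧ ∀ u ∈ X, l ≤ u) (hr : r ∈ X ∧ ∀ u ∈ X, u ≤ r) :
    l ∉ S m ∧ r ∈ S m ∧ ∀ i, l ∉ S i → r ∈ S i → m ≤ i := by
  obtain ⟨⟨a, haMX⟩, -, ⟨b, hbXM⟩⟩ := hm.1
  rw [mem_inter] at haMX
  rw [mem_sdiff] at hbXM
  have hlm : l ∉ S m := fun hlm =>
    (hm.lt_of_notMem_of_mem hS hLF hbXM.1 hl.1 hbXM.2 hlm).not_ge (hl.2 b hbXM.1)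
  have hrm : r ∈ S m := by_contra fun hrm =>
    (hm.lt_of_notMem_of_mem hS hLF hr.1 haMX.2 hrm haMX.1).not_ge (hr.2 a haMX.2)
  exact ⟨hlm, hrm, fun i hli hri =>
    le_of_not_gt fun him => hli ((hm.mem_iff_mem_of_lt hLF him hl.1 hr.1).2 hri)⟩

end MaxOverlap

end LexColumnOrder

theorem stmt9_general {V : Type*} [DecidableEq V]
    (F : Finset (Finset V))
    (lo : LinearOrder {X : Finset V // X ∈ F})
    (hLF : ∀ A B : {X : Finset V // X ∈ F},
      (B : Finset V).card < (A : Finset V).card → lo.lt A B)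
    (lv : LinearOrder V)
    (hlex : ∀ v w : V, lv.lt v w →
      ∀ Z : {X : Finset V // X ∈ F},
        ¬(v ∈ (Z : Finset V) ↔ w ∈ (Z : Finset V)) →
        (∀ Z' : {X : Finset V // X ∈ F}, lo.lt Z' Z →
          (v ∈ (Z' : Finset V) ↔ w ∈ (Z' : Finset V))) →
        v ∉ (Z : Finset V) ∧ w ∈ (Z : Finset V))
    (X : {X : Finset V // X ∈ F})
    (l r : V)
    (hl : l ∈ (X : Finset V) ∧ ∀ u ∈ (X : Finset V), lv.le l u)
    (hr : r ∈ (X : Finset V) ∧ ∀ u ∈ (X : Finset V), lv.le u r)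
    (M : {X : Finset V // X ∈ F})
    (hMover : Overlaps (M : Finset V) (X : Finset V))
    (hMcard : (X : Finset V).card ≤ (M : Finset V).card)
    (hMleast : ∀ Z : {X : Finset V // X ∈ F},
      (X : Finset V).card ≤ (Z : Finset V).card →
      Overlaps (Z : Finset V) (X : Finset V) → lo.le M Z) :
    l ∉ (M : Finset V) ∧ r ∈ (M : Finset V) ∧
    ∀ Y : {X : Finset V // X ∈ F},
      l ∉ (Y : Finset V) → r ∈ (Y : Finset V) → lo.le M Y :=
  @IsMaxOverlap.isLeast_separating _ _ _ lo _ _ _ lv hlex hLF ⟨hMover, hMcard, hMleast⟩ _ _ hl hr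

/-- Fix an LF order `lo` on `F` and a lex column order `lv` on `V`, and let
`X ∈ F` be nonempty with `Max(X)` defined (here `M`). Then `Max(X)` is the
`≼`-least set `Y ∈ F` satisfying `left(X) ∉ Y` and `right(X) ∈ Y`. -/
theorem stmt9 {V : Type*} [Fintype V] [DecidableEq V]
    (F : Finset (Finset V))
    (lo : LinearOrder {X : Finset V // X ∈ F})
    (hLF : ∀ A B : {X : Finset V // X ∈ F},
      (B : Finset V).card < (A : Finset V).card → lo.lt A B)
    (lv : LinearOrder V)
    (hlex : ∀ v w : V, lv.lt v w →
      ∀ Z : {X : Finset V // X ∈ F},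
        ¬(v ∈ (Z : Finset V) ↔ w ∈ (Z : Finset V)) →
        (∀ Z' : {X : Finset V // X ∈ F}, lo.lt Z' Z →
          (v ∈ (Z' : Finset V) ↔ w ∈ (Z' : Finset V))) →
        v ∉ (Z : Finset V) ∧ w ∈ (Z : Finset V))
    (X : {X : Finset V // X ∈ F}) (hXne : (X : Finset V).Nonempty)
    (l r : V)
    (hl : l ∈ (X : Finset V) ∧ ∀ u ∈ (X : Finset V), lv.le l u)
    (hr : r ∈ (X : Finset V) ∧ ∀ u ∈ (X : Finset V), lv.le u r)
    (M : {X : Finset V // X ∈ F})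
    (hMover : Overlaps (M : Finset V) (X : Finset V))
    (hMcard : (X : Finset V).card ≤ (M : Finset V).card)
    (hMleast : ∀ Z : {X : Finset V // X ∈ F},
      (X : Finset V).card ≤ (Z : Finset V).card →
      Overlaps (Z : Finset V) (X : Finset V) → lo.le M Z) :
    l ∉ (M : Finset V) ∧ r ∈ (M : Finset V) ∧
    ∀ Y : {X : Finset V // X ∈ F},
      l ∉ (Y : Finset V) → r ∈ (Y : Finset V) → lo.le M Y :=
  stmt9_general F lo hLF lv hlex X l r hl hr M hMover hMcard hMleast
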